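/- Let W ∼ N(0,1) independent of V ∼ (1/2)N(−s,1) + (1/2)N(s,1), F(α,β) = E[V·tanh(αV + βW)], and f(α) = F(α,0). Then for α ≥ 0 and β ≥ 0, f(α) − (1 + s²)·α·β² ≤ F(α,β) ≤ f(α). -/

import Mathlib

open MeasureTheory ProbabilityTheory
open scoped ENNReal

/-- The symmetric two-component Gaussian mixture `(1/2)N(−s,1) + (1/2)N(s,1)`. -/
noncomputable def mixG (s : ℝ) : Measure ℝ :=
  (1 / 2 : ℝ≥0∞) • gaussianReal (-s) 1 + (1 / 2 : ℝ≥0∞) • gaussianReal s 1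

/-- `F(α,β) = E[V·tanh(αV + βW)]` with `V ∼ mixG s` independent of `W ∼ N(0,1)`. -/
noncomputable def Fmap (s α β : ℝ) : ℝ :=
  ∫ p : ℝ × ℝ, p.1 * Real.tanh (α * p.1 + β * p.2)
    ∂((mixG s).prod (gaussianReal 0 1))

/-- `G(α,β) = E[W·tanh(αV + βW)]` with `V ∼ mixG s` independent of `W ∼ N(0,1)`. -/
noncomputable def Gmap (s α β : ℝ) : ℝ :=
  ∫ p : ℝ × ℝ, p.2 * Real.tanh (α * p.1 + β * p.2)
    ∂((mixG s).prod (gaussianReal 0 1))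

/-!
The Gaussian `W` is symmetric, so `F(α, β) = F(α, -β)` and
`2 (f(α) - F(α, β)) = E[V (2 tanh(αV) - tanh(αV + βW) - tanh(αV - βW))]`.
The addition formulas give
`2 tanh x - tanh(x + h) - tanh(x - h) = 2 tanh x · sinh² h / (cosh² x + sinh² h)`,
and since `0 ≤ v tanh(αv) ≤ αv²` and `0 ≤ sinh² h / (cosh² x + sinh² h) ≤ tanh² h ≤ h²`,
the integrand lies between `0` and `2αβ² V² W²`, whose expectation is `2αβ² (1 + s²)`.
-/

namespace Real

lemma tanh_nonneg {x : ℝ} (hx : 0 ≤ x) : 0 ≤ tanh x := by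
  rw [tanh_eq_sinh_div_cosh]
  exact div_nonneg (sinh_nonneg_iff.2 hx) (cosh_pos x).le

-- `x cosh x - sinh x` vanishes at `0` and has derivative `x sinh x ≥ 0` on `[0, ∞)`.
lemma tanh_le_self {x : ℝ} (hx : 0 ≤ x) : tanh x ≤ x := by
  have hderiv (y : ℝ) : HasDerivAt (fun y ↦ y * cosh y - sinh y) (y * sinh y) y := by
    refine (((hasDerivAt_id y).mul (hasDerivAt_cosh y)).sub (hasDerivAt_sinh y)).congr_deriv ?_
    simp only [id, one_mul]
    ring
  have hmono : MonotoneOn (fun y ↦ y * cosh y - sinh y) (Set.Ici 0) := by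
    refine monotoneOn_of_deriv_nonneg (convex_Ici 0)
      (fun y _ ↦ (hderiv y).continuousAt.continuousWithinAt)
      (fun y _ ↦ (hderiv y).differentiableAt.differentiableWithinAt) fun y hy ↦ ?_
    rw [(hderiv y).deriv]
    have hy : 0 < y := by simpa using hy
    exact mul_nonneg hy.le (sinh_nonneg_iff.2 hy.le)
  have := hmono Set.self_mem_Ici (Set.mem_Ici.2 hx) hx
  rw [tanh_eq_sinh_div_cosh, div_le_iff₀ (cosh_pos x)]
  simpa using this

lemma abs_tanh_le_abs (x : ℝ) : |tanh x| ≤ |x| := by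
  rcases le_total 0 x with hx | hx
  · rw [abs_of_nonneg (tanh_nonneg hx), abs_of_nonneg hx]
    exact tanh_le_self hx
  · rw [← abs_neg, ← tanh_neg, ← abs_neg x, abs_of_nonneg (tanh_nonneg (neg_nonneg.2 hx)),
      abs_of_nonneg (neg_nonneg.2 hx)]
    exact tanh_le_self (neg_nonneg.2 hx)

@[fun_prop]
lemma continuous_tanh : Continuous tanh := by
  simp only [funext tanh_eq_sinh_div_cosh]
  exact continuous_sinh.div continuous_cosh fun x ↦ (cosh_pos x).ne'

lemma mul_tanh_mul_nonneg {α : ℝ} (hα : 0 ≤ α) (v : ℝ) : 0 ≤ v * tanh (α * v) := by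
  rcases le_total 0 v with hv | hv
  · exact mul_nonneg hv (tanh_nonneg (mul_nonneg hα hv))
  · have := tanh_nonneg (mul_nonneg hα (neg_nonneg.2 hv))
    rw [mul_neg, tanh_neg, neg_nonneg] at this
    exact mul_nonneg_of_nonpos_of_nonpos hv this

lemma mul_tanh_mul_le {α : ℝ} (hα : 0 ≤ α) (v : ℝ) : v * tanh (α * v) ≤ α * v ^ 2 :=
  calc v * tanh (α * v) ≤ |v| * |tanh (α * v)| := by rw [← abs_mul]; exact le_abs_self _
    _ ≤ |v| * |α * v| := mul_le_mul_of_nonneg_left (abs_tanh_le_abs _) (abs_nonneg v)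
    _ = α * v ^ 2 := by rw [abs_mul, abs_of_nonneg hα, ← sq_abs v]; ring

-- The denominator is `cosh (x + h) * cosh (x - h) = cosh x ^ 2 + sinh h ^ 2`.
lemma two_tanh_sub_tanh_add_sub_tanh_sub (x h : ℝ) :
    2 * tanh x - tanh (x + h) - tanh (x - h)
      = 2 * tanh x * (sinh h ^ 2 / (cosh x ^ 2 + sinh h ^ 2)) := by
  have hplus : cosh x * cosh h + sinh x * sinh h ≠ 0 := cosh_add x h ▸ (cosh_pos _).ne'
  have hminus : cosh x * cosh h - sinh x * sinh h ≠ 0 := cosh_sub x h ▸ (cosh_pos _).ne'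
  have hx : cosh x ≠ 0 := (cosh_pos x).ne'
  have hden : cosh x ^ 2 + sinh h ^ 2 ≠ 0 := by positivity
  simp only [tanh_eq_sinh_div_cosh, sinh_add, cosh_add, sinh_sub, cosh_sub]
  field_simp
  linear_combination (2 * sinh x * cosh x ^ 2 * sinh h ^ 2) * (cosh_sq x - cosh_sq h)

lemma sinh_sq_div_cosh_sq_add_sinh_sq_le (x h : ℝ) :
    sinh h ^ 2 / (cosh x ^ 2 + sinh h ^ 2) ≤ h ^ 2 :=
  calc sinh h ^ 2 / (cosh x ^ 2 + sinh h ^ 2) ≤ sinh h ^ 2 / cosh h ^ 2 := by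
        rw [cosh_sq' h]
        gcongr
        nlinarith [one_le_cosh x]
    _ = tanh h ^ 2 := by rw [tanh_eq_sinh_div_cosh, div_pow]
    _ ≤ h ^ 2 := sq_le_sq.2 (abs_tanh_le_abs h)

lemma mul_two_tanh_sub_tanh_add_sub_tanh_sub_nonneg {α : ℝ} (hα : 0 ≤ α) (v h : ℝ) :
    0 ≤ v * (2 * tanh (α * v) - tanh (α * v + h) - tanh (α * v - h)) := by
  rw [two_tanh_sub_tanh_add_sub_tanh_sub, ← mul_assoc, mul_left_comm]
  have := mul_tanh_mul_nonneg hα v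
  positivity

lemma mul_two_tanh_sub_tanh_add_sub_tanh_sub_le {α : ℝ} (hα : 0 ≤ α) (v h : ℝ) :
    v * (2 * tanh (α * v) - tanh (α * v + h) - tanh (α * v - h)) ≤ 2 * α * (v ^ 2 * h ^ 2) := by
  rw [two_tanh_sub_tanh_add_sub_tanh_sub, ← mul_assoc, mul_left_comm]
  calc 2 * (v * tanh (α * v)) * (sinh h ^ 2 / (cosh (α * v) ^ 2 + sinh h ^ 2))
      ≤ 2 * (α * v ^ 2) * h ^ 2 := by
        refine mul_le_mul (by linarith [mul_tanh_mul_le hα v])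
          (sinh_sq_div_cosh_sq_add_sinh_sq_le _ h) (by positivity) (by positivity)
    _ = 2 * α * (v ^ 2 * h ^ 2) := by ring

end Real

open Real
open scoped NNReal

lemma integral_sq_gaussianReal (μ : ℝ) (v : ℝ≥0) : ∫ x, x ^ 2 ∂gaussianReal μ v = v + μ ^ 2 := by
  have h := variance_eq_sub (memLp_id_gaussianReal (μ := μ) (v := v) 2)
  rw [variance_id_gaussianReal] at h
  simp only [id_eq, Pi.pow_apply, integral_id_gaussianReal] at h
  linarith

instance isProbabilityMeasure_mixG (s : ℝ) : IsProbabilityMeasure (mixG s) := by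
  constructor
  simp only [mixG, Measure.add_apply, Measure.smul_apply, measure_univ, smul_eq_mul, mul_one]
  exact ENNReal.add_halves 1

lemma integrable_mixG {s : ℝ} {f : ℝ → ℝ} (h₁ : Integrable f (gaussianReal (-s) 1))
    (h₂ : Integrable f (gaussianReal s 1)) : Integrable f (mixG s) :=
  (h₁.smul_measure (by norm_num)).add_measure (h₂.smul_measure (by norm_num))

lemma integral_mixG {s : ℝ} {f : ℝ → ℝ} (h₁ : Integrable f (gaussianReal (-s) 1))
    (h₂ : Integrable f (gaussianReal s 1)) :
    ∫ x, f x ∂mixG s = (∫ x, f x ∂gaussianReal (-s) 1 + ∫ x, f x ∂gaussianReal s 1) / 2 := by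
  rw [mixG, integral_add_measure (h₁.smul_measure (by norm_num)) (h₂.smul_measure (by norm_num)),
    integral_smul_measure, integral_smul_measure]
  norm_num
  ring

lemma integrable_sq_gaussianReal (μ : ℝ) (v : ℝ≥0) :
    Integrable (fun x ↦ x ^ 2) (gaussianReal μ v) :=
  (memLp_id_gaussianReal 2).integrable_sq

lemma integrable_id_mixG (s : ℝ) : Integrable id (mixG s) :=
  integrable_mixG ((memLp_id_gaussianReal 1).integrable le_rfl)
    ((memLp_id_gaussianReal 1).integrable le_rfl)

lemma integrable_sq_mixG (s : ℝ) : Integrable (fun x ↦ x ^ 2) (mixG s) :=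
  integrable_mixG (integrable_sq_gaussianReal _ _) (integrable_sq_gaussianReal _ _)

lemma integral_sq_mixG (s : ℝ) : ∫ x, x ^ 2 ∂mixG s = 1 + s ^ 2 := by
  rw [integral_mixG (integrable_sq_gaussianReal _ _) (integrable_sq_gaussianReal _ _),
    integral_sq_gaussianReal, integral_sq_gaussianReal, neg_sq]
  push_cast
  ring

lemma integrable_fst_mul_tanh {μ ν : Measure ℝ} [SFinite μ] [IsProbabilityMeasure ν]
    (hμ : Integrable id μ) (α β : ℝ) :
    Integrable (fun p : ℝ × ℝ ↦ p.1 * tanh (α * p.1 + β * p.2)) (μ.prod ν) := by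
  have hfst : Integrable (fun p : ℝ × ℝ ↦ p.1) (μ.prod ν) := by
    simpa using hμ.mul_prod (integrable_const (1 : ℝ) (μ := ν))
  refine hfst.norm.mono' (by fun_prop) (ae_of_all _ fun p ↦ ?_)
  rw [norm_mul]
  exact mul_le_of_le_one_right (norm_nonneg _) (abs_tanh_lt_one _).le

lemma integral_comp_neg_snd_gaussianReal {μ : Measure ℝ} [SFinite μ] (v : ℝ≥0) (f : ℝ × ℝ → ℝ) :
    ∫ p, f (p.1, -p.2) ∂μ.prod (gaussianReal 0 v) = ∫ p, f p ∂μ.prod (gaussianReal 0 v) := by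
  have hneg : MeasurePreserving (MeasurableEquiv.neg ℝ) (gaussianReal 0 v) (gaussianReal 0 v) :=
    ⟨measurable_neg, by simpa using gaussianReal_map_neg (μ := 0) (v := v)⟩
  exact ((MeasurePreserving.id μ).prod hneg).integral_comp'
    (f := (MeasurableEquiv.refl ℝ).prodCongr (MeasurableEquiv.neg ℝ)) f

lemma Fmap_neg (s α β : ℝ) : Fmap s α (-β) = Fmap s α β := by
  rw [Fmap, Fmap, ← integral_comp_neg_snd_gaussianReal]
  simp only [neg_mul_neg]

lemma two_mul_Fmap_zero_sub_Fmap (s α β : ℝ) :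
    2 * (Fmap s α 0 - Fmap s α β) = ∫ p, p.1 * (2 * tanh (α * p.1) - tanh (α * p.1 + β * p.2)
      - tanh (α * p.1 - β * p.2)) ∂(mixG s).prod (gaussianReal 0 1) := by
  have hint (γ : ℝ) := integrable_fst_mul_tanh (ν := gaussianReal 0 1) (integrable_id_mixG s) α γ
  calc 2 * (Fmap s α 0 - Fmap s α β) = 2 * Fmap s α 0 - Fmap s α β - Fmap s α (-β) := by
        rw [Fmap_neg]; ring
    _ = ∫ p, (2 * (p.1 * tanh (α * p.1 + 0 * p.2)) - p.1 * tanh (α * p.1 + β * p.2)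
          - p.1 * tanh (α * p.1 + -β * p.2)) ∂(mixG s).prod (gaussianReal 0 1) := by
        rw [integral_sub ?_ (hint (-β)), integral_sub ((hint 0).const_mul 2) (hint β),
          integral_const_mul, Fmap, Fmap, Fmap]
        exact ((hint 0).const_mul 2).sub (hint β)
    _ = _ := by
      congr 1 with p
      simp only [zero_mul, add_zero, neg_mul, ← sub_eq_add_neg]
      ring

lemma Fmap_le_Fmap_zero {α : ℝ} (hα : 0 ≤ α) (s β : ℝ) : Fmap s α β ≤ Fmap s α 0 := by
  have h : 0 ≤ 2 * (Fmap s α 0 - Fmap s α β) := by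
    rw [two_mul_Fmap_zero_sub_Fmap]
    exact integral_nonneg fun p ↦ mul_two_tanh_sub_tanh_add_sub_tanh_sub_nonneg hα p.1 (β * p.2)
  linarith

lemma Fmap_zero_sub_le_Fmap {α : ℝ} (hα : 0 ≤ α) (s β : ℝ) :
    Fmap s α 0 - (1 + s ^ 2) * α * β ^ 2 ≤ Fmap s α β := by
  have hmoment : ∫ p : ℝ × ℝ, p.1 ^ 2 * p.2 ^ 2 ∂(mixG s).prod (gaussianReal 0 1) = 1 + s ^ 2 := by
    rw [integral_prod_mul (fun v ↦ v ^ 2) (fun w ↦ w ^ 2), integral_sq_mixG,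
      integral_sq_gaussianReal]
    simp
  have h := integral_mono_of_nonneg
    (ae_of_all _ fun p ↦ mul_two_tanh_sub_tanh_add_sub_tanh_sub_nonneg hα p.1 (β * p.2))
    (((integrable_sq_mixG s).mul_prod (integrable_sq_gaussianReal 0 1)).const_mul (2 * α * β ^ 2))
    (ae_of_all _ fun p ↦ (mul_two_tanh_sub_tanh_add_sub_tanh_sub_le hα p.1 (β * p.2)).trans_eq
      (by ring))
  rw [← two_mul_Fmap_zero_sub_Fmap, integral_const_mul, hmoment] at h
  linarith

theorem stmt_14_general (s α β : ℝ) (hα : 0 ≤ α) :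
    Fmap s α 0 - (1 + s ^ 2) * α * β ^ 2 ≤ Fmap s α β ∧ Fmap s α β ≤ Fmap s α 0 :=
  ⟨Fmap_zero_sub_le_Fmap hα s β, Fmap_le_Fmap_zero hα s β⟩

/-- With `f(α) = F(α,0)`: for `α ≥ 0` and `β ≥ 0`,
`f(α) − (1 + s²)·α·β² ≤ F(α,β) ≤ f(α)`. -/
theorem stmt_14 (s α β : ℝ) (hα : 0 ≤ α) (hβ : 0 ≤ β) :
    Fmap s α 0 - (1 + s ^ 2) * α * β ^ 2 ≤ Fmap s α β ∧ Fmap s α β ≤ Fmap s α 0 :=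
  stmt_14_general s α β hα
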